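/- arXiv:1507.06511 — 6 statements merged into one kernel-verified Lean document; each statement's English description precedes it below -/
import Mathlib

section
/- Let (A, f) be an indecomposable finite-dimensional commutative Frobenius algebra over a field of characteristic 0 containing a nonzero nilpotent element. Then the Euler class e_{A,f} is nilpotent. -/
/-!
Writing `E = ∑ i, e i * d i`, the trace of multiplication by `a` is `f (a * E)`. Multiplication
by a nilpotent element has trace zero, so for nilpotent `u` the element `u * E` is orthogonal to
all of `A` and hence vanishes. An indecomposable Artinian ring is local, so `E` is nilpotent or a
unit, and a unit `E` would force `u = 0`.
-/

theorem IsArtinianRing.isLocalRing_of_forall_isIdempotentElem {R : Type*} [CommRing R]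
    [IsArtinianRing R] [Nontrivial R] (h : ∀ e : R, IsIdempotentElem e → e = 0 ∨ e = 1) :
    IsLocalRing R := by
  obtain ⟨m, hm⟩ := Ideal.exists_maximal R
  refine IsLocalRing.of_unique_max_ideal ⟨m, hm, fun q hq => ?_⟩
  by_contra hqm
  obtain ⟨r, hrm, hr, hrq⟩ := exists_not_mem_forall_mem_of_ne (R := R) m
  rcases h r hr with rfl | rfl
  · exact hrm m.zero_mem
  · exact hq.ne_top ((Ideal.eq_top_iff_one q).mpr (hrq q hq.isPrime hqm))

section DualBasis

variable {K A ι : Type*} [CommRing K] [Ring A] [Algebra K A] [DecidableEq ι]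
  {f : A →ₗ[K] K} (e : Module.Basis ι K A) {d : ι → A}

theorem apply_mul_eq_repr_of_dual (hd : ∀ i j, f (e i * d j) = if i = j then (1 : K) else 0)
    (x : A) (i : ι) : f (x * d i) = e.repr x i := by
  have hcomp : f ∘ₗ LinearMap.mulRight K (d i) = e.coord i :=
    e.ext fun j => by simp [hd j i, Finsupp.single_apply]
  exact LinearMap.congr_fun hcomp x

variable [Fintype ι]

theorem trace_mulLeft_eq_apply_mul_sum (hd : ∀ i j, f (e i * d j) = if i = j then (1 : K) else 0)
    (a : A) : LinearMap.trace K A (LinearMap.mulLeft K a) = f (a * ∑ i, e i * d i) := by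
  simp only [LinearMap.trace_eq_matrix_trace K e, Matrix.trace, Matrix.diag_apply,
    LinearMap.toMatrix_apply, LinearMap.mulLeft_apply, Finset.mul_sum, map_sum, ← mul_assoc,
    apply_mul_eq_repr_of_dual e hd]

end DualBasis

theorem mul_sum_eq_zero_of_isNilpotent {K A ι : Type*} [CommRing K] [IsReduced K] [CommRing A]
    [Algebra K A] [Fintype ι] [DecidableEq ι] {f : A →ₗ[K] K}
    (hf : ∀ a : A, (∀ b : A, f (a * b) = 0) → a = 0) (e : Module.Basis ι K A) {d : ι → A}
    (hd : ∀ i j, f (e i * d j) = if i = j then (1 : K) else 0) {u : A} (hu : IsNilpotent u) :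
    u * ∑ i, e i * d i = 0 := by
  refine hf _ fun b => ?_
  have hub : IsNilpotent (LinearMap.mulLeft K (u * b)) :=
    ((Commute.all u b).isNilpotent_mul_right hu).map (Algebra.lmul K A)
  rw [mul_right_comm, ← trace_mulLeft_eq_apply_mul_sum e hd]
  exact (LinearMap.isNilpotent_trace_of_isNilpotent hub).eq_zero

theorem euler_class_nilpotent_of_indecomposable_general (K A : Type) [Field K]
    [CommRing A] [Algebra K A] [FiniteDimensional K A] [Nontrivial A]
    (hind : ∀ x : A, IsIdempotentElem x → x = 0 ∨ x = 1)
    (f : A →ₗ[K] K)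
    (hf : ∀ a : A, (∀ b : A, f (a * b) = 0) → a = 0)
    (u : A) (hu : u ≠ 0) (hunil : IsNilpotent u)
    (ι : Type) [Fintype ι] [DecidableEq ι] (e : Module.Basis ι K A) (d : ι → A)
    (hd : ∀ i j, f (e i * d j) = if i = j then (1 : K) else 0) :
    IsNilpotent (∑ i, e i * d i) := by
  have := IsArtinianRing.of_finite K A
  have := IsArtinianRing.isLocalRing_of_forall_isIdempotentElem hind
  refine Ring.KrullDimLE.isNilpotent_iff_mem_nonunits.mpr fun hE => hu ?_
  exact hE.mul_left_eq_zero.mp (mul_sum_eq_zero_of_isNilpotent hf e hd hunil)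

/-- If an indecomposable finite-dimensional commutative Frobenius algebra contains a
nonzero nilpotent element, then its Euler class is nilpotent. -/
theorem euler_class_nilpotent_of_indecomposable (K A : Type) [Field K] [CharZero K]
    [CommRing A] [Algebra K A] [FiniteDimensional K A] [Nontrivial A]
    (hind : ∀ x : A, IsIdempotentElem x → x = 0 ∨ x = 1)
    (f : A →ₗ[K] K)
    (hf : ∀ a : A, (∀ b : A, f (a * b) = 0) → a = 0)
    (u : A) (hu : u ≠ 0) (hunil : IsNilpotent u)
    (ι : Type) [Fintype ι] [DecidableEq ι] (e : Module.Basis ι K A) (d : ι → A)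
    (hd : ∀ i j, f (e i * d j) = if i = j then (1 : K) else 0) :
    IsNilpotent (∑ i, e i * d i) :=
  euler_class_nilpotent_of_indecomposable_general K A hind f hf u hu hunil ι e d hd
end

section
/- A finite-dimensional commutative Frobenius algebra (A, f) over a field of characteristic 0 contains a field as a direct summand in its algebra direct sum decomposition if and only if its Euler class e_{A,f} is not nilpotent. -/
set_option linter.unusedVariables false
set_option maxHeartbeats 1000000

/-- `Equiv.piSplitAt` as a ring equivalence. -/
def ringEquivPiSplitAt {α : Type*} [DecidableEq α] (i : α) (β : α → Type*)
    [∀ j, NonUnitalNonAssocSemiring (β j)] :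
    (∀ j, β j) ≃+* β i × ∀ j : { j // j ≠ i }, β j :=
  { Equiv.piSplitAt i β with
    map_mul' := fun _ _ => rfl
    map_add' := fun _ _ => rfl }

def ringEquivProdShuffle (α β γ : Type*) [NonUnitalNonAssocSemiring α]
    [NonUnitalNonAssocSemiring β] [NonUnitalNonAssocSemiring γ] :
    α × (β × γ) ≃+* β × (α × γ) where
  toFun p := (p.2.1, (p.1, p.2.2))
  invFun p := (p.2.1, (p.1, p.2.2))
  left_inv _ := rfl
  right_inv _ := rfl
  map_mul' _ _ := rfl
  map_add' _ _ := rfl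




theorem euler_trace (K A : Type) [Field K] [CommRing A] [Algebra K A] [FiniteDimensional K A]
    (f : A →ₗ[K] K) (ι : Type) [Fintype ι] [DecidableEq ι] (e : Module.Basis ι K A) (d : ι → A)
    (hd : ∀ i j, f (e i * d j) = if i = j then (1 : K) else 0) (a : A) :
    f ((∑ i, e i * d i) * a) = LinearMap.trace K A (LinearMap.mulLeft K a) := by
  have hrepr : ∀ (x : A) (i : ι), e.repr x i = f (x * d i) := by
    intro x i
    conv_rhs => rw [← e.sum_repr x]
    rw [Finset.sum_mul, map_sum]
    simp only [smul_mul_assoc, map_smul, hd, smul_eq_mul, mul_ite, mul_one, mul_zero]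
    rw [Finset.sum_ite_eq' Finset.univ i (fun j => e.repr x j)]
    simp
  rw [LinearMap.trace_eq_matrix_trace K e, Matrix.trace]
  simp only [Matrix.diag_apply, LinearMap.toMatrix_apply, LinearMap.mulLeft_apply]
  rw [Finset.sum_mul, map_sum]
  refine Finset.sum_congr rfl fun i _ => ?_
  rw [hrepr]
  congr 1
  ring

/-- f(eu * a) = 0 for nilpotent a -/
theorem euler_nilp (K A : Type) [Field K] [CommRing A] [Algebra K A] [FiniteDimensional K A]
    (f : A →ₗ[K] K) (ι : Type) [Fintype ι] [DecidableEq ι] (e : Module.Basis ι K A) (d : ι → A)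
    (hd : ∀ i j, f (e i * d j) = if i = j then (1 : K) else 0) (a : A)
    (ha : IsNilpotent a) : f ((∑ i, e i * d i) * a) = 0 := by
  rw [euler_trace K A f ι e d hd a]
  have : IsNilpotent (LinearMap.mulLeft K a) := by
    obtain ⟨k, hk⟩ := ha
    exact ⟨k, by rw [LinearMap.pow_mulLeft, hk, LinearMap.mulLeft_zero_eq_zero]⟩
  exact (LinearMap.isNilpotent_trace_of_isNilpotent this).eq_zero


theorem pack (K A F A' : Type) [Field K] [CommRing A] [Algebra K A]
    [Field F] [CommRing A'] (Φ : A ≃+* F × A') :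
    ∃ (F₀ A'' : Type) (iF : Field F₀) (iA' : CommRing A'')
      (aF : Algebra K F₀) (aA' : Algebra K A''), Nonempty (A ≃ₐ[K] F₀ × A'') := by
  letI aF : Algebra K F := ((RingHom.fst F A').comp (Φ.toRingHom.comp (algebraMap K A))).toAlgebra
  letI aA' : Algebra K A' := ((RingHom.snd F A').comp (Φ.toRingHom.comp (algebraMap K A))).toAlgebra
  exact ⟨F, A', inferInstance, inferInstance, aF, aA',
    ⟨AlgEquiv.ofRingEquiv (f := Φ) fun x => rfl⟩⟩


/-- A finite-dimensional commutative Frobenius algebra over a field of characteristic 0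
contains a field as a direct summand iff its Euler class is not nilpotent. -/
theorem field_factor_iff_euler_not_nilpotent (K A : Type) [Field K] [CharZero K]
    [CommRing A] [Algebra K A] [FiniteDimensional K A]
    (f : A →ₗ[K] K)
    (hf : ∀ a : A, (∀ b : A, f (a * b) = 0) → a = 0)
    (ι : Type) [Fintype ι] [DecidableEq ι] (e : Module.Basis ι K A) (d : ι → A)
    (hd : ∀ i j, f (e i * d j) = if i = j then (1 : K) else 0) :
    (∃ (F A' : Type) (iF : Field F) (iA' : CommRing A')
        (aF : Algebra K F) (aA' : Algebra K A'),
        Nonempty (A ≃ₐ[K] F × A')) ↔ ¬ IsNilpotent (∑ i, e i * d i) := by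
  constructor
  · rintro ⟨F, A', iF, iA', aF, aA', ⟨ψ⟩⟩
    intro hnil
    set eu := ∑ i, e i * d i with heu
    haveI : FiniteDimensional K (F × A') := Module.Finite.equiv ψ.toLinearEquiv
    haveI : FiniteDimensional K F :=
      Module.Finite.of_surjective (LinearMap.fst K F A') Prod.fst_surjective
    haveI : FiniteDimensional K A' :=
      Module.Finite.of_surjective (LinearMap.snd K F A') Prod.snd_surjective
    set x := ψ.symm (1, 0) with hx
    -- the euler element kills x
    have h3 : eu * x = 0 := by
      have h1 : IsNilpotent ((ψ eu).1) := (hnil.map ψ.toRingEquiv.toRingHom).map (RingHom.fst F A')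
      have h2 : (ψ eu).1 = 0 := h1.eq_zero
      have : ψ (eu * x) = 0 := by
        rw [map_mul, hx, AlgEquiv.apply_symm_apply]
        ext
        · simpa using h2
        · simp
      simpa using congrArg ψ.symm this
    -- trace identity
    have h4 : LinearMap.trace K A (LinearMap.mulLeft K x) = (Module.finrank K F : K) := by
      have hconj : LinearMap.mulLeft K x = ψ.toLinearEquiv.symm.conj
          (LinearMap.mulLeft K ((1 : F), (0 : A'))) := by
        ext a
        simp only [LinearEquiv.conj_apply, LinearMap.mulLeft_apply, LinearMap.coe_comp,
          Function.comp_apply, LinearEquiv.coe_coe, AlgEquiv.toLinearEquiv_symm,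
          AlgEquiv.toLinearEquiv_apply, hx, AlgEquiv.symm_symm]
        rw [LinearEquiv.symm_symm]
        show ψ.symm (1, 0) * a = ψ.symm ((1, 0) * ψ a)
        rw [map_mul, AlgEquiv.symm_apply_apply]
      have hprod : LinearMap.mulLeft K ((1 : F), (0 : A')) =
          (LinearMap.id : F →ₗ[K] F).prodMap (0 : A' →ₗ[K] A') := by
        apply LinearMap.prod_ext <;> ext v <;> simp
      rw [hconj, LinearMap.trace_conj', hprod, LinearMap.trace_prodMap',
        LinearMap.trace_id, map_zero, add_zero]
    have h5 : (Module.finrank K F : K) ≠ 0 := by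
      have : 0 < Module.finrank K F := Module.finrank_pos
      exact_mod_cast this.ne'
    exact h5 (by rw [← h4, ← euler_trace K A f ι e d hd x, ← heu, h3, map_zero])
  · intro h
    classical
    set eu := ∑ i, e i * d i with heu
    haveI : IsArtinianRing A := IsArtinianRing.of_finite K A
    -- stabilization of the chain of ideals (eu^k)
    obtain ⟨m, hm⟩ := IsArtinian.monotone_stabilizes (R := A) (M := A)
      ⟨fun k => OrderDual.toDual (Ideal.span {eu ^ k}), by
        intro k l hkl
        simp only [OrderDual.toDual_le_toDual]
        exact Ideal.span_singleton_le_span_singleton.mpr (pow_dvd_pow eu hkl)⟩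
    set n := max m 1 with hn
    have hn1 : 1 ≤ n := le_max_right m 1
    have hspan : Ideal.span {eu ^ n} = Ideal.span {eu ^ (2 * n)} := by
      have h1 := hm n (le_max_left m 1)
      have h2 := hm (2 * n) (le_trans (le_max_left m 1) (by omega))
      exact OrderDual.toDual.injective (h1.symm.trans h2)
    obtain ⟨x, hx⟩ : ∃ x, x * eu ^ (2 * n) = eu ^ n :=
      Ideal.mem_span_singleton'.mp (hspan ▸ Ideal.mem_span_singleton_self _)
    have h2n : eu ^ (2 * n) = eu ^ n * eu ^ n := by rw [two_mul, pow_add]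
    set g := x * eu ^ n with hg
    have hgg : eu ^ n * g = eu ^ n := by
      calc eu ^ n * g = x * eu ^ (2 * n) := by rw [h2n]; ring
      _ = eu ^ n := hx
    have hidem : g * g = g := by
      calc g * g = x * (eu ^ n * g) := by ring
      _ = g := by rw [hgg]
    have hgne : g ≠ 0 := by
      intro h0
      exact h ⟨n, by rw [← hgg, h0, mul_zero]⟩
    -- eu = e * rest on the g part
    have hgeu : eu * (x * eu ^ (n - 1)) = g := by
      rw [hg]
      rw [show eu * (x * eu ^ (n - 1)) = x * (eu * eu ^ (n - 1)) by ring,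
        ← pow_succ', Nat.sub_add_cancel hn1]
    set I := Ideal.span {g} with hI
    set J := Ideal.span {1 - g} with hJ
    have coprime : IsCoprime I J := by
      rw [hI, hJ, Ideal.isCoprime_span_singleton_iff]
      exact ⟨1, 1, by ring⟩
    have hinf : I ⊓ J = ⊥ := by
      refine le_antisymm ?_ bot_le
      rintro a ⟨ha1, ha2⟩
      obtain ⟨c, hc⟩ := Ideal.mem_span_singleton'.mp ha1
      obtain ⟨c', hc'⟩ := Ideal.mem_span_singleton'.mp ha2
      have h1 : a * g = a := by rw [← hc]; calc c * g * g = c * (g * g) := by ring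
                                                        _ = c * g := by rw [hidem]
      have h2 : a * g = 0 := by
        rw [← hc']; calc c' * (1 - g) * g = c' * (g - g * g) := by ring
          _ = 0 := by rw [hidem]; ring
      rw [Submodule.mem_bot, ← h1]; exact h2
    -- the decomposition
    have Φ₁ : A ≃+* (A ⧸ I) × (A ⧸ J) :=
      ((RingEquiv.quotientBot A).symm.trans (Ideal.quotEquivOfEq hinf.symm)).trans
        (Ideal.quotientInfEquivQuotientProd I J coprime)
    -- A ⧸ J is nontrivial
    have hJne : J ≠ ⊤ := by
      intro htop
      obtain ⟨y, hy⟩ := Ideal.mem_span_singleton'.mp (hJ ▸ htop ▸ Submodule.mem_top (x := (1:A)))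
      apply hgne
      calc g = (y * (1 - g)) * g := by rw [hy]; ring
      _ = y * (g - g * g) := by ring
      _ = 0 := by rw [hidem]; ring
    haveI : Nontrivial (A ⧸ J) := Ideal.Quotient.nontrivial_iff.mpr hJne
    -- A ⧸ J is reduced
    haveI : IsReduced (A ⧸ J) := by
      constructor
      intro α hα
      obtain ⟨a, rfl⟩ := Ideal.Quotient.mk_surjective α
      obtain ⟨k, hk⟩ := hα
      have hk' : a ^ (k + 1) ∈ J := by
        have : a ^ k ∈ J := by
          rw [← Ideal.Quotient.eq_zero_iff_mem, map_pow]; exact hk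
        simpa [pow_succ'] using J.mul_mem_left a this
      obtain ⟨c, hc⟩ := Ideal.mem_span_singleton'.mp hk'
      -- (a*g) is nilpotent in A
      have hmnil : IsNilpotent (a * g) := by
        refine ⟨k + 1, ?_⟩
        have hgk : ∀ l : ℕ, g ^ (l + 1) = g := by
          intro l
          induction l with
          | zero => simp
          | succ l ih => rw [pow_succ, ih, hidem]
        calc (a * g) ^ (k + 1) = a ^ (k + 1) * g ^ (k + 1) := by rw [mul_pow]
        _ = c * (1 - g) * g := by rw [hgk k, ← hc]
        _ = c * (g - g * g) := by ring
        _ = 0 := by rw [hidem]; ring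
      -- a * g = 0 via nondegeneracy
      have hag : a * g = 0 := by
        apply hf
        intro b
        have key : (a * g) * b = eu * (x * eu ^ (n - 1) * (a * g * b)) := by
          calc (a * g) * b = (g * g) * (a * b) := by rw [hidem]; ring
          _ = (eu * (x * eu ^ (n - 1))) * g * (a * b) := by rw [hgeu]
          _ = eu * (x * eu ^ (n - 1) * (a * g * b)) := by ring
        rw [key, heu] at *
        refine euler_nilp K A f ι e d hd _ ?_
        rw [show x * (∑ i, e i * d i) ^ (n-1) * (a * g * b) = (a*g) * (x * (∑ i, e i * d i) ^ (n-1) * b) by ring]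
        exact (Commute.all _ _).isNilpotent_mul_right hmnil
      rw [Ideal.Quotient.eq_zero_iff_mem]
      have ha' : a * (1 - g) = a := by rw [mul_sub, mul_one, hag, sub_zero]
      exact ha' ▸ Ideal.mul_mem_left J a (Ideal.mem_span_singleton_self _)
    -- decompose A ⧸ J into a product of fields
    set B := A ⧸ J with hB
    have equivPi := (IsArtinianRing.equivPi B).toRingEquiv
    obtain ⟨M, hM⟩ := Ideal.exists_maximal B
    set i₀ : MaximalSpectrum B := ⟨M, hM⟩ with hi₀
    haveI : Finite (MaximalSpectrum B) := inferInstance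
    haveI := Fintype.ofFinite (MaximalSpectrum B)
    letI : ∀ I : MaximalSpectrum B, Field (B ⧸ I.asIdeal) :=
      fun I => have := I.isMaximal; Ideal.Quotient.field I.asIdeal
    have split := ringEquivPiSplitAt i₀ (fun I : MaximalSpectrum B => B ⧸ I.asIdeal)
    have Φ : A ≃+* (B ⧸ i₀.asIdeal) ×
        ((A ⧸ I) × (∀ j : {j : MaximalSpectrum B // j ≠ i₀}, B ⧸ j.1.asIdeal)) :=
      (Φ₁.trans (RingEquiv.prodCongr (RingEquiv.refl (A ⧸ I)) (equivPi.trans split))).trans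
        (ringEquivProdShuffle _ _ _)
    exact pack K A _ _ Φ
end

section
/- For any element ν of a finite-dimensional commutative Frobenius algebra (A, f), the trace of the multiplication operator M_ν : a ↦ a·ν equals f(e_{A,f} · ν), where e_{A,f} is the Euler class. -/
/-! Duality of `e` and `d` under `(a, b) ↦ f (a * b)` makes `a ↦ f (a * d j)` the `j`-th
coordinate function of `e`, so the diagonal entries of `M_ν` in `e` are `f (ν * e i * d i)`, and
their sum is `f (ν * ∑ i, e i * d i)` by linearity. -/

section DualFamily

variable {R A ι : Type*} [CommSemiring R] [Semiring A] [Algebra R A] [Fintype ι] [DecidableEq ι]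
  (f : A →ₗ[R] R) (e : Module.Basis ι R A) (d : ι → A)

theorem Module.Basis.repr_apply_eq_apply_mul_of_dual
    (hd : ∀ i j, f (e i * d j) = if i = j then 1 else 0) (a : A) (j : ι) :
    e.repr a j = f (a * d j) := by
  conv_rhs => rw [← e.sum_repr a]
  simp only [Finset.sum_mul, smul_mul_assoc, map_sum, map_smul, hd, smul_eq_mul, mul_ite, mul_one,
    mul_zero, Finset.sum_ite_eq', Finset.mem_univ, if_true]

theorem LinearMap.trace_eq_sum_apply_mul_of_dual
    (hd : ∀ i j, f (e i * d j) = if i = j then 1 else 0) (φ : A →ₗ[R] A) :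
    trace R A φ = ∑ i, f (φ (e i) * d i) := by
  simp [trace_eq_matrix_trace R e, Matrix.trace, LinearMap.toMatrix_apply,
    e.repr_apply_eq_apply_mul_of_dual f d hd]

theorem LinearMap.trace_mulLeft_eq_of_dual
    (hd : ∀ i j, f (e i * d j) = if i = j then 1 else 0) (ν : A) :
    trace R A (mulLeft R ν) = f (ν * ∑ i, e i * d i) := by
  simp [trace_eq_sum_apply_mul_of_dual f e d hd, Finset.mul_sum, mul_assoc]

end DualFamily

theorem trace_mul_eq_f_euler_mul_general (K A : Type) [Field K]
    [CommRing A] [Algebra K A]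
    (f : A →ₗ[K] K)
    (ι : Type) [Fintype ι] [DecidableEq ι] (e : Module.Basis ι K A) (d : ι → A)
    (hd : ∀ i j, f (e i * d j) = if i = j then (1 : K) else 0)
    (ν : A) :
    LinearMap.trace K A (LinearMap.mulLeft K ν) = f ((∑ i, e i * d i) * ν) := by
  rw [LinearMap.trace_mulLeft_eq_of_dual f e d hd, mul_comm]

/-- The trace of the multiplication operator `M_ν` equals `f (e_{A,f} · ν)`. -/
theorem trace_mul_eq_f_euler_mul (K A : Type) [Field K]
    [CommRing A] [Algebra K A] [FiniteDimensional K A]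
    (f : A →ₗ[K] K)
    (hf : ∀ a : A, (∀ b : A, f (a * b) = 0) → a = 0)
    (ι : Type) [Fintype ι] [DecidableEq ι] (e : Module.Basis ι K A) (d : ι → A)
    (hd : ∀ i j, f (e i * d j) = if i = j then (1 : K) else 0)
    (ν : A) :
    LinearMap.trace K A (LinearMap.mulLeft K ν) = f ((∑ i, e i * d i) * ν) :=
  trace_mul_eq_f_euler_mul_general K A f ι e d hd ν
end

section
/- The Euler class e_{A,f} of a finite-dimensional commutative Frobenius algebra (A, f) over a field of characteristic 0 is nilpotent if and only if e_{A,f}² = 0. -/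
/-!
Write `E = ∑ i, e i * d i`. Expanding the trace in the basis `e` gives
`Tr(x ↦ ν * x) = f (ν * E)`. If `E` is nilpotent then so is `E * b` for every `b`, hence
`f (E * E * b) = Tr(x ↦ E * b * x) = 0`, and nondegeneracy of `f` forces `E * E = 0`.
-/

open Module

variable {R A ι : Type*} [CommRing R] [CommRing A] [Algebra R A] [Fintype ι] [DecidableEq ι]
  {f : A →ₗ[R] R} {e : Basis ι R A} {d : ι → A}

def eulerClass (e d : ι → A) : A := ∑ i, e i * d i

theorem Module.Basis.repr_eq_apply_mul_of_dual
    (hd : ∀ i j, f (e i * d j) = if i = j then (1 : R) else 0) (x : A) (i : ι) :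
    e.repr x i = f (x * d i) := by
  conv_rhs => rw [← e.sum_repr x]
  simp only [Finset.sum_mul, map_sum, smul_mul_assoc, map_smul, hd, smul_eq_mul, mul_ite,
    mul_one, mul_zero, Finset.sum_ite_eq', Finset.mem_univ, if_true]

theorem Algebra.trace_eq_apply_mul_eulerClass
    (hd : ∀ i j, f (e i * d j) = if i = j then (1 : R) else 0) (ν : A) :
    Algebra.trace R A ν = f (ν * eulerClass e d) := by
  rw [Algebra.trace_eq_matrix_trace e, Matrix.trace, eulerClass, Finset.mul_sum, map_sum]
  refine Finset.sum_congr rfl fun i _ => ?_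
  rw [Matrix.diag_apply, Algebra.leftMulMatrix_eq_repr_mul, e.repr_eq_apply_mul_of_dual hd,
    mul_assoc]

theorem apply_mul_eulerClass_eq_zero_of_isNilpotent [IsReduced R]
    (hd : ∀ i j, f (e i * d j) = if i = j then (1 : R) else 0) {ν : A} (hν : IsNilpotent ν) :
    f (ν * eulerClass e d) = 0 := by
  rw [← Algebra.trace_eq_apply_mul_eulerClass hd]
  exact (Algebra.isNilpotent_trace_of_isNilpotent hν).eq_zero

theorem euler_class_nilpotent_iff_sq_zero_general (K A : Type) [Field K]
    [CommRing A] [Algebra K A]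
    (f : A →ₗ[K] K)
    (hf : ∀ a : A, (∀ b : A, f (a * b) = 0) → a = 0)
    (ι : Type) [Fintype ι] [DecidableEq ι] (e : Module.Basis ι K A) (d : ι → A)
    (hd : ∀ i j, f (e i * d j) = if i = j then (1 : K) else 0) :
    IsNilpotent (∑ i, e i * d i) ↔ (∑ i, e i * d i) * (∑ i, e i * d i) = 0 := by
  change IsNilpotent (eulerClass e d) ↔ eulerClass e d * eulerClass e d = 0
  refine ⟨fun hE => hf _ fun b => ?_, fun hE => ⟨2, by rw [pow_two, hE]⟩⟩
  have hEb : IsNilpotent (eulerClass e d * b) := (Commute.all _ b).isNilpotent_mul_right hE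
  rw [mul_right_comm]
  exact apply_mul_eulerClass_eq_zero_of_isNilpotent hd hEb

/-- The Euler class of a finite-dimensional commutative Frobenius algebra over a field
of characteristic 0 is nilpotent iff its square vanishes. -/
theorem euler_class_nilpotent_iff_sq_zero (K A : Type) [Field K] [CharZero K]
    [CommRing A] [Algebra K A] [FiniteDimensional K A]
    (f : A →ₗ[K] K)
    (hf : ∀ a : A, (∀ b : A, f (a * b) = 0) → a = 0)
    (ι : Type) [Fintype ι] [DecidableEq ι] (e : Module.Basis ι K A) (d : ι → A)
    (hd : ∀ i j, f (e i * d j) = if i = j then (1 : K) else 0) :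
    IsNilpotent (∑ i, e i * d i) ↔ (∑ i, e i * d i) * (∑ i, e i * d i) = 0 :=
  euler_class_nilpotent_iff_sq_zero_general K A f hf ι e d hd
end

section
/- A finite-dimensional commutative Frobenius algebra (A, f) over a field of characteristic 0 contains a field as a direct summand if and only if e_{A,f}² ≠ 0. -/
/-! The Euler class `E = ∑ eᵢ dᵢ` represents the trace: `f (E * a) = Tr(a)` for all `a`.

If `A ≅ F × A'` with `F` a field, pairing `E` with the idempotent `(1, 0)` gives `[F : K] ≠ 0`,
so the `F`-component of `E` is nonzero, hence so is that of `E²`.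

Conversely, `E` kills every nilpotent element, whose traces vanish. If `E² ≠ 0`, then `E` is not
nilpotent and avoids some prime `p`, which is both maximal and minimal since `A` is Artinian.
For every `x ∈ p` some `s ∉ p` makes `s x` nilpotent, so `E s x = 0`; as `E s` is invertible
modulo `p`, this puts `x` in `p²`. Thus `p = p²` is generated by an idempotent, which splits off
the field `A ⧸ p`. -/

open Module

theorem Ideal.exists_notMem_isNilpotent_mul_of_mem_minimalPrimes {R : Type*} [CommRing R]
    {p : Ideal R} (hp : p ∈ minimalPrimes R) {x : R} (hx : x ∈ p) :
    ∃ s ∉ p, IsNilpotent (s * x) := by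
  have : p.IsPrime := hp.isPrime
  have hrad := IsLocalization.AtPrime.radical_map_of_mem_minimalPrimes
    (Localization.AtPrime p) p ⊥ hp
  have hxrad : algebraMap R (Localization.AtPrime p) x ∈
      ((⊥ : Ideal R).map (algebraMap R (Localization.AtPrime p))).radical := by
    rw [hrad]
    exact Ideal.mem_map_of_mem _ hx
  obtain ⟨n, hn⟩ := hxrad
  rw [Ideal.map_bot, Ideal.mem_bot, ← map_pow,
    IsLocalization.map_eq_zero_iff p.primeCompl] at hn
  obtain ⟨⟨s, hs⟩, hsx⟩ := hn
  exact ⟨s, hs, n + 1, by linear_combination (s ^ n * x) * hsx⟩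

theorem Ideal.isIdempotentElem_of_mem_minimalPrimes {R : Type*} [CommRing R]
    {p : Ideal R} [p.IsMaximal] (hp : p ∈ minimalPrimes R) {E : R} (hEp : E ∉ p)
    (hE : ∀ a, IsNilpotent a → E * a = 0) : IsIdempotentElem p := by
  refine le_antisymm Ideal.mul_le_right fun x hx => ?_
  obtain ⟨s, hsp, hsx⟩ := exists_notMem_isNilpotent_mul_of_mem_minimalPrimes hp hx
  obtain ⟨y, c, hc, hyc⟩ :=
    Ideal.IsMaximal.exists_inv ‹_› (Ideal.IsPrime.mul_notMem inferInstance hEp hsp)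
  have hx_eq : x = c * x := by linear_combination (-x) * hyc + y * hE _ hsx
  rw [hx_eq]
  exact Ideal.mul_mem_mul hc hx

theorem Ideal.exists_algEquiv_quotient_prod_of_isIdempotentElem (R : Type*) {A : Type*}
    [CommRing R] [CommRing A] [Algebra R A] {I : Ideal A} (hfg : I.FG)
    (hI : IsIdempotentElem I) : ∃ J : Ideal A, Nonempty (A ≃ₐ[R] (A ⧸ I) × (A ⧸ J)) := by
  obtain ⟨e, he, rfl⟩ := (Ideal.isIdempotentElem_iff_of_fg I hfg).mp hI
  exact ⟨_, ⟨AlgEquiv.prodQuotientOfIsIdempotentElem R he he.one_sub (add_sub_cancel e 1)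
    (by rw [mul_sub, mul_one, he.eq, sub_self])⟩⟩

theorem AlgEquiv.trace_symm_one_zero {K A F A' : Type*} [Field K] [CommRing A] [Algebra K A]
    [CommRing F] [CommRing A'] [Algebra K F] [Algebra K A'] [Module.Finite K F]
    [Module.Finite K A'] (φ : A ≃ₐ[K] F × A') :
    Algebra.trace K A (φ.symm (1, 0)) = finrank K F := by
  rw [← Algebra.trace_eq_of_algEquiv φ, φ.apply_symm_apply, Algebra.trace_prod_apply, map_zero,
    add_zero, ← map_one (algebraMap K F), Algebra.trace_algebraMap, nsmul_one]

namespace Module.Basis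

variable {K A ι : Type*} [CommRing K] [CommRing A] [Algebra K A] [DecidableEq ι]
  {f : A →ₗ[K] K} {e : Basis ι K A} {d : ι → A}

theorem apply_mul_eq_repr (hd : ∀ i j, f (e i * d j) = if i = j then 1 else 0) (x : A) (j : ι) :
    f (x * d j) = e.repr x j := by
  have : f ∘ₗ LinearMap.mulRight K (d j) = e.coord j :=
    e.ext fun i => by simp [hd, Finsupp.single_apply]
  exact LinearMap.congr_fun this x

variable [Fintype ι]

noncomputable def eulerClass (e : Basis ι K A) (d : ι → A) : A := ∑ i, e i * d i

theorem apply_eulerClass_mul (hd : ∀ i j, f (e i * d j) = if i = j then 1 else 0) (a : A) :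
    f (e.eulerClass d * a) = Algebra.trace K A a := by
  simp only [eulerClass, Algebra.trace_eq_matrix_trace e, Matrix.trace, Matrix.diag_apply,
    Algebra.leftMulMatrix_eq_repr_mul, Finset.sum_mul, map_sum, ← e.apply_mul_eq_repr hd]
  exact Finset.sum_congr rfl fun i _ => by ring_nf

end Module.Basis

namespace FrobeniusAlgebra

theorem mul_self_ne_zero_of_algEquiv_prod {K A F A' : Type*} [Field K] [CharZero K] [CommRing A]
    [Algebra K A] [FiniteDimensional K A] [Field F] [CommRing A'] [Algebra K F] [Algebra K A']
    (f : A →ₗ[K] K) {E : A} (hE : ∀ a, f (E * a) = Algebra.trace K A a) (φ : A ≃ₐ[K] F × A') :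
    E * E ≠ 0 := by
  have : Module.Finite K F := .of_surjective ((LinearMap.fst K F A').comp φ.toLinearMap)
    (Prod.fst_surjective.comp φ.surjective)
  have : Module.Finite K A' := .of_surjective ((LinearMap.snd K F A').comp φ.toLinearMap)
    (Prod.snd_surjective.comp φ.surjective)
  have hE₁ : (φ E).1 ≠ 0 := by
    intro hE₁
    have hε : E * φ.symm (1, 0) = 0 := φ.injective (by simp [Prod.ext_iff, hE₁])
    have hfinrank := hE (φ.symm (1, 0))
    rw [hε, map_zero, φ.trace_symm_one_zero] at hfinrank
    exact (Nat.cast_ne_zero.mpr finrank_pos.ne') hfinrank.symm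
  intro hEE
  exact hE₁ (mul_self_eq_zero.mp (by simpa using congrArg (fun x => (φ x).1) hEE))

theorem mul_eq_zero_of_isNilpotent {K A : Type*} [CommRing K] [IsReduced K] [CommRing A]
    [Algebra K A] {f : A →ₗ[K] K} (hf : ∀ a : A, (∀ b : A, f (a * b) = 0) → a = 0) {E : A}
    (hE : ∀ a, f (E * a) = Algebra.trace K A a) {a : A} (ha : IsNilpotent a) : E * a = 0 :=
  hf _ fun b => by
    rw [mul_assoc, hE]
    exact (Algebra.isNilpotent_trace_of_isNilpotent
      ((Commute.all a b).isNilpotent_mul_right ha)).eq_zero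

theorem exists_isMaximal_algEquiv_quotient_prod {K A : Type*} [CommRing K] [IsReduced K]
    [CommRing A] [Algebra K A] [IsArtinianRing A] {f : A →ₗ[K] K}
    (hf : ∀ a : A, (∀ b : A, f (a * b) = 0) → a = 0) {E : A}
    (hE : ∀ a, f (E * a) = Algebra.trace K A a) (hEE : E * E ≠ 0) :
    ∃ p : Ideal A, p.IsMaximal ∧ ∃ J : Ideal A, Nonempty (A ≃ₐ[K] (A ⧸ p) × (A ⧸ J)) := by
  have hnil : ∀ a, IsNilpotent a → E * a = 0 := fun _ => mul_eq_zero_of_isNilpotent hf hE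
  obtain ⟨p, hp, hEp⟩ : ∃ p : Ideal A, p.IsPrime ∧ E ∉ p := by
    simpa [nilpotent_iff_mem_prime] using fun h => hEE (hnil E h)
  have := IsArtinianRing.isMaximal_of_isPrime p
  exact ⟨p, this, p.exists_algEquiv_quotient_prod_of_isIdempotentElem K
    (IsNoetherian.noetherian p) (Ideal.isIdempotentElem_of_mem_minimalPrimes
      (IsArtinianRing.mem_minimalPrimes bot_le) hEp hnil)⟩

end FrobeniusAlgebra

/-- A finite-dimensional commutative Frobenius algebra over a field of characteristic 0
contains a field as a direct summand iff the square of its Euler class is nonzero. -/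
theorem field_factor_iff_euler_sq_ne_zero (K A : Type) [Field K] [CharZero K]
    [CommRing A] [Algebra K A] [FiniteDimensional K A]
    (f : A →ₗ[K] K)
    (hf : ∀ a : A, (∀ b : A, f (a * b) = 0) → a = 0)
    (ι : Type) [Fintype ι] [DecidableEq ι] (e : Module.Basis ι K A) (d : ι → A)
    (hd : ∀ i j, f (e i * d j) = if i = j then (1 : K) else 0) :
    (∃ (F A' : Type) (iF : Field F) (iA' : CommRing A')
        (aF : Algebra K F) (aA' : Algebra K A'),
        Nonempty (A ≃ₐ[K] F × A')) ↔ (∑ i, e i * d i) * (∑ i, e i * d i) ≠ 0 := by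
  have hE := e.apply_eulerClass_mul hd
  constructor
  · rintro ⟨F, A', _, _, _, _, ⟨φ⟩⟩
    exact FrobeniusAlgebra.mul_self_ne_zero_of_algEquiv_prod f hE φ
  · intro hEE
    have : IsArtinianRing A := .of_finite K A
    obtain ⟨p, hp, J, ⟨φ⟩⟩ := FrobeniusAlgebra.exists_isMaximal_algEquiv_quotient_prod hf hE hEE
    exact ⟨A ⧸ p, A ⧸ J, Ideal.Quotient.field p, inferInstance, inferInstance, inferInstance, ⟨φ⟩⟩
end

section
/- A finite-dimensional commutative Frobenius algebra (A, f) over a field of characteristic 0 is semisimple (i.e., a finite direct product of field extensions of K) if and only if its Euler class e_{A,f} is a unit in A. -/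
open Algebra in
/-- Trace of an element of a finite product of finite-dimensional algebras
is the sum of the componentwise traces. -/
lemma trace_pi_eq_sum {K : Type} [Field K] {n : Type} [Fintype n] [DecidableEq n]
    (B : n → Type) [∀ i, CommRing (B i)] [∀ i, Algebra K (B i)]
    [∀ i, FiniteDimensional K (B i)] (x : Π i, B i) :
    Algebra.trace K (Π i, B i) x = ∑ i, Algebra.trace K (B i) (x i) := by
  classical
  let b : ∀ i, Module.Basis (Fin (Module.finrank K (B i))) K (B i) := fun i => Module.finBasis K (B i)
  rw [Algebra.trace_eq_matrix_trace (Pi.basis b), Matrix.trace]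
  rw [← Finset.univ_sigma_univ, Finset.sum_sigma]
  refine Finset.sum_congr rfl fun i _ => ?_
  rw [Algebra.trace_eq_matrix_trace (b i), Matrix.trace]
  refine Finset.sum_congr rfl fun k _ => ?_
  have hmul : x * Pi.single i (b i k) = Pi.single i (x i * b i k) := by
    funext j
    by_cases h : j = i
    · subst h; simp
    · simp [Pi.single_eq_of_ne h]
  simp only [Matrix.diag_apply, Algebra.leftMulMatrix_eq_repr_mul, Pi.basis_apply, hmul,
    Pi.basis_repr, Pi.single_eq_same]



/-- A finite-dimensional commutative Frobenius algebra over a field of characteristic 0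
is semisimple (a finite direct product of field extensions of `K`) iff its Euler class
is a unit. -/
theorem semisimple_iff_euler_unit (K A : Type) [Field K] [CharZero K]
    [CommRing A] [Algebra K A] [FiniteDimensional K A]
    (f : A →ₗ[K] K)
    (hf : ∀ a : A, (∀ b : A, f (a * b) = 0) → a = 0)
    (ι : Type) [Fintype ι] [DecidableEq ι] (e : Module.Basis ι K A) (d : ι → A)
    (hd : ∀ i j, f (e i * d j) = if i = j then (1 : K) else 0) :
    (∃ (n : ℕ) (F : Fin n → Type) (iF : ∀ i, Field (F i)) (aF : ∀ i, Algebra K (F i)),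
        Nonempty (A ≃ₐ[K] Π i, F i)) ↔ IsUnit (∑ i, e i * d i) := by
  classical
  set u : A := ∑ i, e i * d i with hu
  -- Step 1: f (x * d i) recovers the coordinates in the basis `e`.
  have hrepr : ∀ (x : A) (i : ι), f (x * d i) = e.repr x i := by
    intro x i
    have key : (f.comp (LinearMap.mulRight K (d i))) = e.coord i := by
      apply e.ext
      intro j
      simp [hd j i, Finsupp.single_apply, eq_comm]
    have := congrArg (fun g => g x) key
    simpa using this
  -- Step 2: f (u * a) is the trace of multiplication by a.
  have htr : ∀ a : A, f (u * a) = Algebra.trace K A a := by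
    intro a
    have hsum : u * a = ∑ i, (a * e i) * d i := by
      rw [hu, Finset.sum_mul]
      exact Finset.sum_congr rfl fun i _ => by ring
    rw [hsum, map_sum, Algebra.trace_eq_matrix_trace e, Matrix.trace]
    refine Finset.sum_congr rfl fun i _ => ?_
    rw [hrepr]
    simp [Algebra.leftMulMatrix_eq_repr_mul]
  -- Step 3: the Euler class is a unit iff the trace form is nondegenerate.
  have keyiff : IsUnit u ↔ ∀ a : A, (∀ b : A, Algebra.trace K A (a * b) = 0) → a = 0 := by
    constructor
    · intro hU a ha
      have h0 : u * a = 0 := by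
        apply hf
        intro b
        have := ha b
        rw [← htr (a * b), ← mul_assoc] at this
        exact this
      exact hU.mul_left_cancel (by rw [h0, mul_zero])
    · intro N
      have hinj : Function.Injective (LinearMap.mulLeft K u) := by
        intro x y hxy
        have h0 : u * (x - y) = 0 := by
          have : u * x = u * y := hxy
          rw [mul_sub, this, sub_self]
        have : x - y = 0 := by
          apply N
          intro b
          rw [← htr ((x - y) * b), ← mul_assoc, h0, zero_mul, map_zero]
        exact sub_eq_zero.mp this
      have hsurj := (LinearMap.injective_iff_surjective).mp hinj
      obtain ⟨v, hv⟩ := hsurj 1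
      exact IsUnit.of_mul_eq_one v hv
  rw [keyiff]
  constructor
  · -- semisimple → nondegenerate trace form
    rintro ⟨n, F, iF, aF, ⟨φ⟩⟩
    haveI : ∀ i, FiniteDimensional K (F i) := by
      intro i
      refine Module.Finite.of_surjective
        ((Pi.evalAlgHom K F i).comp φ.toAlgHom).toLinearMap ?_
      intro y
      exact ⟨φ.symm (Pi.single i y), by simp⟩
    haveI : ∀ i, Algebra.IsSeparable K (F i) := fun i => inferInstance
    intro a ha
    have key : ∀ i, φ a i = 0 := by
      intro i
      by_contra hne
      have hnd := traceForm_nondegenerate K (F i)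
      have : ∃ y : F i, Algebra.trace K (F i) (φ a i * y) ≠ 0 := by
        by_contra hc
        push_neg at hc
        exact hne (hnd.1 (φ a i) (fun y => by simpa [Algebra.traceForm_apply] using hc y))
      obtain ⟨y, hy⟩ := this
      apply hy
      have h1 : Algebra.trace K (Π i, F i) (φ (a * φ.symm (Pi.single i y))) = 0 := by
        rw [Algebra.trace_eq_of_algEquiv φ]
        exact ha _
      rw [map_mul, AlgEquiv.apply_symm_apply, trace_pi_eq_sum] at h1
      rw [Finset.sum_eq_single i] at h1
      · simpa using h1
      · intro j _ hj
        simp [Pi.single_eq_of_ne hj]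
      · intro h; exact absurd (Finset.mem_univ i) h
    have : φ a = 0 := funext key
    have := congrArg φ.symm this
    simpa using this
  · -- nondegenerate trace form → semisimple
    intro N
    haveI hart : IsArtinianRing A := isArtinian_of_tower K inferInstance
    haveI : IsReduced A := by
      constructor
      intro x hx
      apply N
      intro b
      have hnil : IsNilpotent (x * b) := by
        obtain ⟨m, hm⟩ := hx
        exact ⟨m, by rw [mul_pow, hm, zero_mul]⟩
      exact (Algebra.isNilpotent_trace_of_isNilpotent hnil).eq_zero
    haveI hfin : Finite {I : Ideal A | I.IsMaximal} :=
      (IsArtinianRing.setOfPred_isMaximal_finite A).to_subtype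
    haveI : Fintype {I : Ideal A | I.IsMaximal} := Fintype.ofFinite _
    set n := Fintype.card {I : Ideal A | I.IsMaximal} with hn
    let ε : Fin n ≃ {I : Ideal A | I.IsMaximal} := (Fintype.equivFin _).symm
    haveI hmax : ∀ i : Fin n, ((ε i : Ideal A)).IsMaximal := fun i => (ε i).2
    refine ⟨n, fun i => A ⧸ (ε i : Ideal A), fun i => Ideal.Quotient.field _,
      fun i => inferInstance, ⟨?_⟩⟩
    let Φ : A →ₐ[K] Π i : Fin n, A ⧸ (ε i : Ideal A) :=
      Pi.algHom _ _ (fun i => Ideal.Quotient.mkₐ K _)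
    have hcop : Pairwise fun i j : Fin n => IsCoprime (ε i : Ideal A) (ε j : Ideal A) := by
      intro i j hij
      refine Ideal.isCoprime_iff_sup_eq.mpr (Ideal.IsMaximal.coprime_of_ne (hmax i) (hmax j) ?_)
      intro hIJ
      exact hij (ε.injective (Subtype.ext hIJ))
    refine AlgEquiv.ofBijective Φ ⟨?_, ?_⟩
    · intro x y hxy
      have h0 : IsNilpotent (x - y) := by
        rw [nilpotent_iff_mem_prime]
        intro J hJ
        have hJmax : J.IsMaximal := (IsArtinianRing.isPrime_iff_isMaximal J).mp hJ
        obtain ⟨i, hi⟩ := ε.surjective ⟨J, hJmax⟩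
        have : Φ x i = Φ y i := congrFun hxy i
        have hx : (Ideal.Quotient.mk (ε i : Ideal A)) (x - y) = 0 := by
          rw [map_sub, sub_eq_zero]
          exact this
        have hmem : x - y ∈ (ε i : Ideal A) := Ideal.Quotient.eq_zero_iff_mem.mp hx
        rw [hi] at hmem
        exact hmem
      exact sub_eq_zero.mp h0.eq_zero
    · intro g
      obtain ⟨r, hr⟩ := Ideal.pi_quotient_surjective hcop g
      exact ⟨r, funext fun i => (hr i)⟩
end
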